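/- Let Δ be an abstract simplicial complex on [m] and A_Δ the associated configuration matrix of the hierarchical model. Then the row space of A_Δ equals Σ_{F∈Δ} N_F and the kernel of A_Δ equals Σ_{F∉Δ} N_F, where the sums are spans of the mutually orthogonal incremental subspaces N_F. -/

import Mathlib

open Finset

namespace Hier

variable {m : ℕ}

abbrev Cell (I : Fin m → ℕ) := ∀ j, Fin (I j)

variable (I : Fin m → ℕ)

/-- standard inner product on ℚ^I -/
def dot (x y : Cell I → ℚ) : ℚ := ∑ i, x i * y i

/-- L_E: tables depending only on the coordinates in E -/
def LL (E : Finset (Fin m)) : Submodule ℚ (Cell I → ℚ) where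
  carrier := {x | ∀ i i' : Cell I, (∀ j ∈ E, i j = i' j) → x i = x i'}
  zero_mem' := by intro i i' _; rfl
  add_mem' := by
    intro a b ha hb i i' h
    simp only [Pi.add_apply, ha i i' h, hb i i' h]
  smul_mem' := by
    intro c a ha i i' h
    simp only [Pi.smul_apply, ha i i' h]

/-- orthogonal complement w.r.t. the standard inner product -/
def perp (S : Submodule ℚ (Cell I → ℚ)) : Submodule ℚ (Cell I → ℚ) where
  carrier := {y | ∀ x ∈ S, dot I x y = 0}
  zero_mem' := by intro x hx; simp [dot]
  add_mem' := by
    intro a b ha hb x hx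
    have h1 := ha x hx
    have h2 := hb x hx
    simp only [dot, Pi.add_apply, mul_add, Finset.sum_add_distrib] at *
    rw [h1, h2]; ring
  smul_mem' := by
    intro c a ha x hx
    have h1 := ha x hx
    simp only [dot, Pi.smul_apply, smul_eq_mul] at *
    calc ∑ i, x i * (c * a i) = c * ∑ i, x i * a i := by
          rw [Finset.mul_sum]; congr 1; funext i; ring
      _ = 0 := by rw [h1]; ring

/-- incremental subspace N_E -/
def NN (E : Finset (Fin m)) : Submodule ℚ (Cell I → ℚ) :=
  LL I E ⊓ perp I (⨆ j ∈ E, LL I (E.erase j))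

/-- F-marginal of x evaluated at the marginal cell i_F -/
def marg (x : Cell I → ℚ) (F : Finset (Fin m)) (i : Cell I) : ℚ :=
  ∑ j : Cell I, if ∀ k ∈ F, j k = i k then x j else 0

/-- kernel of the configuration determined by a family of facets:
tables all of whose F-marginals vanish, F ∈ Fs -/
def kern (Fs : Finset (Finset (Fin m))) : Submodule ℚ (Cell I → ℚ) where
  carrier := {y | ∀ F ∈ Fs, ∀ i, marg I y F i = 0}
  zero_mem' := by intro F hF i; simp [marg]
  add_mem' := by
    intro a b ha hb F hF i
    have h1 := ha F hF i
    have h2 := hb F hF i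
    simp only [marg, Pi.add_apply] at *
    have key : (∑ j : Cell I, if ∀ k ∈ F, j k = i k then a j + b j else 0)
        = (∑ j : Cell I, if ∀ k ∈ F, j k = i k then a j else 0)
          + (∑ j : Cell I, if ∀ k ∈ F, j k = i k then b j else 0) := by
      rw [← Finset.sum_add_distrib]
      apply Finset.sum_congr rfl
      intro j _
      split <;> simp
    rw [key, h1, h2]; ring
  smul_mem' := by
    intro c a ha F hF i
    have h1 := ha F hF i
    simp only [marg, Pi.smul_apply, smul_eq_mul] at *
    calc ∑ j : Cell I, (if ∀ k ∈ F, j k = i k then c * a j else 0)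
        = c * ∑ j : Cell I, (if ∀ k ∈ F, j k = i k then a j else 0) := by
          rw [Finset.mul_sum]; congr 1; funext j; split <;> simp
      _ = 0 := by rw [h1]; ring

/-- a (finite) abstract simplicial complex on [m] -/
def IsComplex (Δ : Finset (Finset (Fin m))) : Prop :=
  ∀ F ∈ Δ, ∀ F' ⊆ F, F' ∈ Δ

/-- the maximal elements (facets) of Δ -/
def facets (Δ : Finset (Finset (Fin m))) : Finset (Finset (Fin m)) :=
  Δ.filter (fun D => ∀ F ∈ Δ, D ⊆ F → F = D)

/-- row space of the hierarchical-model configuration A_Δ -/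
def rowsp (Δ : Finset (Finset (Fin m))) : Submodule ℚ (Cell I → ℚ) :=
  ⨆ D ∈ facets Δ, LL I D

/-- single partial difference operator ∂_j -/
def pd1 (hI : ∀ j, 0 < I j) (j : Fin m) (x : Cell I → ℚ) : Cell I → ℚ :=
  fun i => x i - x (Function.update i j ⟨0, hI j⟩)

/-- ∂_E: composition of the (commuting) ∂_j, j ∈ E -/
noncomputable def pdE (hI : ∀ j, 0 < I j) (E : Finset (Fin m)) : (Cell I → ℚ) → (Cell I → ℚ) :=
  E.toList.foldr (fun j f => pd1 I hI j ∘ f) id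

/-! For `x ∈ N_E` and `y ∈ L_{E'}` with `j ∈ E \ E'`, the `E`-marginal of `y` lies in
`L_{E \ {j}}`, hence is orthogonal to `x`; since taking the `E`-marginal is self-adjoint and
acts on `L_E` as multiplication by the (positive) fibre size, `x ⊥ y`. So the `N_F` are mutually
orthogonal. Splitting `L_E` orthogonally along `Σ_{j ∈ E} L_{E \ {j}}` gives
`L_E = Σ_{j ∈ E} L_{E \ {j}} + N_E`, and by induction `L_E = Σ_{F ⊆ E} N_F`. This gives the
row space, and with `L_univ = ℚ^I` the kernel, being its orthogonal complement, is spanned by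
the remaining `N_F`. -/

section Development

variable {I}

lemma dot_comm (x y : Cell I → ℚ) : dot I x y = dot I y x := dotProduct_comm x y

lemma perp_eq_orthogonal (S : Submodule ℚ (Cell I → ℚ)) :
    perp I S = LinearMap.BilinForm.orthogonal (dotProductBilin ℚ ℚ) S := rfl

lemma isCompl_perp (S : Submodule ℚ (Cell I → ℚ)) : IsCompl S (perp I S) := by
  rw [perp_eq_orthogonal, LinearMap.BilinForm.isCompl_orthogonal_iff_disjoint
    fun x y h => (dotProduct_comm y x).trans h]
  refine Submodule.disjoint_def.mpr fun x hxS hx => ?_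
  exact dotProduct_self_eq_zero.mp (hx x hxS)

lemma mem_perp_iff_le_ker {S : Submodule ℚ (Cell I → ℚ)} {y : Cell I → ℚ} :
    y ∈ perp I S ↔ S ≤ LinearMap.ker ((dotProductBilin ℚ ℚ).flip y) :=
  Iff.rfl

lemma perp_iSup {ι : Sort*} (S : ι → Submodule ℚ (Cell I → ℚ)) :
    perp I (⨆ k, S k) = ⨅ k, perp I (S k) := by
  ext y
  simp only [mem_perp_iff_le_ker, iSup_le_iff, Submodule.mem_iInf]

lemma LL_mono {E E' : Finset (Fin m)} (h : E ⊆ E') : LL I E ≤ LL I E' :=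
  fun _ hx i i' hagree => hx i i' fun j hj => hagree j (h hj)

lemma mem_LL_univ (x : Cell I → ℚ) : x ∈ LL I univ :=
  fun _ _ h => congrArg x (funext fun j => h j (mem_univ j))

def fiber (E : Finset (Fin m)) (i : Cell I) : Finset (Cell I) :=
  univ.filter fun j => ∀ k ∈ E, j k = i k

lemma marg_eq_sum_fiber (x : Cell I → ℚ) (E : Finset (Fin m)) (i : Cell I) :
    marg I x E i = ∑ j ∈ fiber E i, x j := by
  rw [fiber, sum_filter, marg]

lemma piecewise_mem_fiber (E : Finset (Fin m)) (i j : Cell I) : E.piecewise i j ∈ fiber E i := by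
  simp only [fiber, mem_filter, mem_univ, true_and]
  exact fun k hk => piecewise_eq_of_mem _ _ _ hk

lemma piecewise_eq_self_of_mem_fiber {E : Finset (Fin m)} {i j : Cell I} (h : j ∈ fiber E i) :
    E.piecewise i j = j := by
  simp only [fiber, mem_filter, mem_univ, true_and] at h
  exact (E.piecewise_congr (fun k hk => (h k hk).symm) fun _ _ => rfl).trans (E.piecewise_same _)

lemma sum_fiber_eq_sum_fiber_piecewise (f : Cell I → ℚ) (E : Finset (Fin m)) (i i' : Cell I) :
    ∑ j ∈ fiber E i, f j = ∑ j ∈ fiber E i', f (E.piecewise i j) := by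
  symm
  refine sum_nbij' (fun j => E.piecewise i j) (fun j => E.piecewise i' j)
    (fun j _ => piecewise_mem_fiber E i j) (fun j _ => piecewise_mem_fiber E i' j)
    (fun j hj => ?_) (fun j hj => ?_) fun _ _ => rfl
  all_goals rw [piecewise_idem_right, piecewise_eq_self_of_mem_fiber hj]

lemma card_fiber_eq (E : Finset (Fin m)) (i i' : Cell I) :
    #(fiber E i) = #(fiber E i') := by
  simpa using sum_fiber_eq_sum_fiber_piecewise (fun _ => (1 : ℚ)) E i i'

lemma marg_mem_LL_inter {E E' : Finset (Fin m)} {y : Cell I → ℚ} (hy : y ∈ LL I E') :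
    marg I y E ∈ LL I (E ∩ E') := by
  intro i i' hii'
  rw [marg_eq_sum_fiber, marg_eq_sum_fiber, sum_fiber_eq_sum_fiber_piecewise y E i i']
  refine sum_congr rfl fun j hj => hy _ _ fun k hk => ?_
  simp only [fiber, mem_filter, mem_univ, true_and] at hj
  by_cases hkE : k ∈ E
  · rw [piecewise_eq_of_mem _ _ _ hkE, hj k hkE]
    exact hii' k (mem_inter.mpr ⟨hkE, hk⟩)
  · exact piecewise_eq_of_notMem _ _ _ hkE

lemma marg_mem_LL (y : Cell I → ℚ) (E : Finset (Fin m)) : marg I y E ∈ LL I E := by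
  simpa using marg_mem_LL_inter (E := E) (mem_LL_univ y)

lemma marg_of_mem_LL {E : Finset (Fin m)} {x : Cell I → ℚ} (hx : x ∈ LL I E) (i : Cell I) :
    marg I x E i = #(fiber E i) * x i := by
  rw [marg_eq_sum_fiber, ← nsmul_eq_mul, ← sum_const]
  refine sum_congr rfl fun j hj => hx j i ?_
  simpa [fiber] using hj

lemma dot_marg_comm (x y : Cell I → ℚ) (E : Finset (Fin m)) :
    dot I x (marg I y E) = dot I (marg I x E) y := by
  simp only [dot, marg, mul_sum, sum_mul, mul_ite, ite_mul, mul_zero, zero_mul]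
  rw [sum_comm]
  refine sum_congr rfl fun j _ => sum_congr rfl fun i _ => ?_
  exact if_congr ⟨fun h k hk => (h k hk).symm, fun h k hk => (h k hk).symm⟩ rfl rfl

lemma dot_marg_eq_card_mul {E : Finset (Fin m)} {x : Cell I → ℚ} (hx : x ∈ LL I E)
    (y : Cell I → ℚ) (i₀ : Cell I) : dot I x (marg I y E) = #(fiber E i₀) * dot I x y := by
  rw [dot_marg_comm, dot, dot, mul_sum]
  refine sum_congr rfl fun i _ => ?_
  rw [marg_of_mem_LL hx, card_fiber_eq E i i₀, mul_assoc]

lemma dot_marg_eq_zero_iff {E : Finset (Fin m)} {x : Cell I → ℚ} (hx : x ∈ LL I E)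
    (y : Cell I → ℚ) : dot I x (marg I y E) = 0 ↔ dot I x y = 0 := by
  rcases isEmpty_or_nonempty (Cell I) with _ | ⟨⟨i₀⟩⟩
  · simp [dot]
  have hcard : (#(fiber E i₀) : ℚ) ≠ 0 :=
    Nat.cast_ne_zero.mpr (card_ne_zero_of_mem (piecewise_mem_fiber E i₀ i₀))
  rw [dot_marg_eq_card_mul hx y i₀, mul_eq_zero, or_iff_right hcard]

lemma mem_perp_LL_iff {E : Finset (Fin m)} {y : Cell I → ℚ} :
    y ∈ perp I (LL I E) ↔ marg I y E = 0 := by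
  constructor
  · intro hy
    have hz := marg_mem_LL y E
    have : dot I (marg I y E) (marg I y E) = 0 := (dot_marg_eq_zero_iff hz y).mpr (hy _ hz)
    exact dotProduct_self_eq_zero.mp this
  · intro hy x hx
    rw [← dot_marg_eq_zero_iff hx, hy]
    exact dotProduct_zero x

lemma kern_eq_perp (Fs : Finset (Finset (Fin m))) : kern I Fs = perp I (⨆ F ∈ Fs, LL I F) := by
  ext y
  simp only [perp_iSup, Submodule.mem_iInf, mem_perp_LL_iff, funext_iff]
  rfl

lemma dot_eq_zero_of_mem_NN_of_mem_LL {E E' : Finset (Fin m)} (h : ¬ E ⊆ E')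
    {x y : Cell I → ℚ} (hx : x ∈ NN I E) (hy : y ∈ LL I E') : dot I x y = 0 := by
  obtain ⟨j, hjE, hjE'⟩ := not_subset.mp h
  have hsub : E ∩ E' ⊆ E.erase j := fun k hk =>
    mem_erase.mpr ⟨ne_of_mem_of_not_mem (mem_inter.mp hk).2 hjE', (mem_inter.mp hk).1⟩
  have hmarg : marg I y E ∈ ⨆ k ∈ E, LL I (E.erase k) :=
    (le_iSup₂ (f := fun k (_ : k ∈ E) => LL I (E.erase k)) j hjE)
      (LL_mono hsub (marg_mem_LL_inter hy))
  rw [← dot_marg_eq_zero_iff hx.1, dot_comm]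
  exact hx.2 _ hmarg

lemma NN_le_perp_NN {E E' : Finset (Fin m)} (h : E ≠ E') : NN I E ≤ perp I (NN I E') := by
  intro y hy x hx
  by_cases hE' : E' ⊆ E
  · rw [dot_comm]
    exact dot_eq_zero_of_mem_NN_of_mem_LL (fun hE => h (Subset.antisymm hE hE')) hy hx.1
  · exact dot_eq_zero_of_mem_NN_of_mem_LL hE' hx hy.1

lemma LL_eq_sup_NN (E : Finset (Fin m)) :
    LL I E = (⨆ j ∈ E, LL I (E.erase j)) ⊔ NN I E := by
  have hle : (⨆ j ∈ E, LL I (E.erase j)) ≤ LL I E :=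
    iSup₂_le fun j _ => LL_mono (erase_subset j E)
  rw [NN, inf_comm, ← sup_inf_assoc_of_le _ hle, (isCompl_perp _).sup_eq_top, top_inf_eq]

lemma LL_le_iSup_NN (E : Finset (Fin m)) : LL I E ≤ ⨆ F ∈ E.powerset, NN I F := by
  induction E using strongInduction with
  | H E ih =>
    rw [LL_eq_sup_NN]
    refine sup_le (iSup₂_le fun j hj => (ih _ (erase_ssubset hj)).trans ?_) ?_
    · exact iSup₂_le fun F hF => le_iSup₂_of_le F
        (mem_powerset.mpr ((mem_powerset.mp hF).trans (erase_subset j E))) le_rfl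
    · exact le_iSup₂_of_le E (mem_powerset_self E) le_rfl

lemma iSup_NN_eq_top : ⨆ F : Finset (Fin m), NN I F = ⊤ :=
  eq_top_iff.mpr fun x _ =>
    (iSup₂_le fun F _ => le_iSup (NN I) F) (LL_le_iSup_NN univ (mem_LL_univ x))

lemma perp_iSup_NN (p : Finset (Fin m) → Prop) :
    perp I (⨆ (F) (_ : p F), NN I F) = ⨆ (F) (_ : ¬ p F), NN I F := by
  set S := ⨆ (F) (_ : p F), NN I F
  set T := ⨆ (F) (_ : ¬ p F), NN I F
  have hT : T ≤ perp I S := by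
    simp only [S, perp_iSup]
    exact iSup₂_le fun F hF => le_iInf₂ fun F' hF' => NN_le_perp_NN fun h => hF (h ▸ hF')
  have hST : ⊤ ≤ T ⊔ S := by
    rw [← iSup_NN_eq_top]
    refine iSup_le fun F => ?_
    by_cases hF : p F
    · exact le_sup_of_le_right (le_iSup₂_of_le F hF le_rfl)
    · exact le_sup_of_le_left (le_iSup₂_of_le F hF le_rfl)
  refine (eq_of_le_of_inf_le_of_sup_le hT ?_ (le_top.trans hST)).symm
  rw [(isCompl_perp S).symm.inf_eq_bot]
  exact bot_le

lemma exists_mem_facets_superset {Δ : Finset (Finset (Fin m))} {F : Finset (Fin m)}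
    (hF : F ∈ Δ) : ∃ D ∈ facets Δ, F ⊆ D := by
  obtain ⟨D, hFD, hD⟩ := Δ.exists_le_maximal hF
  refine ⟨D, mem_filter.mpr ⟨hD.prop, fun G hG hDG => ?_⟩, hFD⟩
  exact (hD.le_of_ge hG hDG).antisymm hDG

lemma rowsp_eq_iSup_NN {Δ : Finset (Finset (Fin m))} (hΔ : IsComplex Δ) :
    rowsp I Δ = ⨆ F ∈ Δ, NN I F := by
  refine le_antisymm (iSup₂_le fun D hD => (LL_le_iSup_NN D).trans ?_) (iSup₂_le fun F hF => ?_)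
  · exact iSup₂_le fun F hF =>
      le_iSup₂_of_le F (hΔ D (mem_filter.mp hD).1 F (mem_powerset.mp hF)) le_rfl
  · obtain ⟨D, hD, hFD⟩ := exists_mem_facets_superset hF
    exact inf_le_left.trans ((LL_mono hFD).trans (le_iSup₂_of_le D hD le_rfl))

end Development

theorem stmt7 (Δ : Finset (Finset (Fin m))) (hΔ : IsComplex Δ) :
    rowsp I Δ = (⨆ F ∈ Δ, NN I F) ∧
    kern I (facets Δ) = ⨆ (F : Finset (Fin m)) (_ : F ∉ Δ), NN I F := by
  have hrow : rowsp I Δ = ⨆ F ∈ Δ, NN I F := rowsp_eq_iSup_NN hΔ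
  refine ⟨hrow, ?_⟩
  rw [kern_eq_perp, ← rowsp, hrow]
  exact perp_iSup_NN (· ∈ Δ)

end Hier
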